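/- arXiv:2311.01569 — 3 statements merged into one kernel-verified Lean document; each statement's English description precedes it below -/
import Mathlib

section
/- For every integer n ≥ 2, the total number of bubbles counted across all linear chord diagrams on 2n vertices satisfies ∑_{p=1}^{2n} B_{n,p} = (2n-2)!·(4n-5) / (2^{n-1}·(n-1)!). -/
open Finset

/-- A linear chord diagram on `2*n` vertices: a fixed-point-free involution of `Fin (2*n)`.
Vertex `v ∈ {1,...,2n}` is represented by the index `v-1 : Fin (2*n)`. -/
def IsLCD (n : ℕ) (f : Fin (2*n) → Fin (2*n)) : Prop :=
  ∀ i, f (f i) = i ∧ f i ≠ i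

/-- The chord `{i, i+1}` (1-based vertices) is a short chord of `f`. -/
def IsShort (n : ℕ) (f : Fin (2*n) → Fin (2*n)) (i : ℕ) : Prop :=
  ∃ (_h1 : 1 ≤ i) (h2 : i < 2*n), f ⟨i-1, by omega⟩ = ⟨i, h2⟩

/-- The interval `[a,b] ⊆ {1,...,2n}` (1-based) is a bubble of the diagram `f`:
it contains no short chord, its left end is the start of the diagram or is preceded
by the short chord `{a-2,a-1}`, and its right end is the end of the diagram or is
followed by the short chord `{b+1,b+2}`. -/
def IsBubble (n : ℕ) (f : Fin (2*n) → Fin (2*n)) (a b : ℕ) : Prop :=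
  1 ≤ a ∧ a ≤ b ∧ b ≤ 2*n ∧
  (∀ i, a ≤ i → i + 1 ≤ b → ¬ IsShort n f i) ∧
  (a = 1 ∨ IsShort n f (a-2)) ∧
  (b = 2*n ∨ IsShort n f (b+1))

open scoped Classical in
/-- `B n p` : the number of pairs `(D, [a,b])` where `D` is a linear chord diagram on
`2n` vertices and `[a,b]` is a bubble of `D` of size `p = b - a + 1`. -/
noncomputable def B (n p : ℕ) : ℕ :=
  ((univ ×ˢ (Finset.Icc 1 (2*n) ×ˢ Finset.Icc 1 (2*n))).filter
    (fun x : (Fin (2*n) → Fin (2*n)) × ℕ × ℕ =>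
      IsLCD n x.1 ∧ IsBubble n x.1 x.2.1 x.2.2 ∧ x.2.2 - x.2.1 + 1 = p)).card

open scoped Classical in
/-- `d n s` : the number of linear chord diagrams on `2n` vertices having exactly `s`
short chords. -/
noncomputable def d (n s : ℕ) : ℕ :=
  (univ.filter (fun f : Fin (2*n) → Fin (2*n) =>
    IsLCD n f ∧ ((Finset.Icc 1 (2*n-1)).filter (fun i => IsShort n f i)).card = s)).card

open scoped Classical in
/-- `pathMatch m j` : the number of `j`-edge matchings of the path graph on `m` vertices
`{1,...,m}` with edges `{i,i+1}`, `1 ≤ i ≤ m-1`.  An edge is encoded by its left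
endpoint; a set of edges is a matching iff no two left endpoints are consecutive. -/
noncomputable def pathMatch (m j : ℕ) : ℕ :=
  (((Finset.Icc 1 (m-1)).powerset).filter
    (fun S => S.card = j ∧ ∀ i ∈ S, i + 1 ∉ S)).card

/-- The double factorial `(2m-1)!! = (2m)! / (2^m * m!)`, so `(-1)!! = 1`. -/
def doubleFact (m : ℕ) : ℕ := (2*m).factorial / (2^m * m.factorial)

/-! A bubble is determined by its left end `a`: `a` is `1` or follows a short chord, and `a` does
not itself start a short chord.  Prescribing `k` disjoint chords of a diagram on `2n` points
leaves an arbitrary diagram on the other `2n - 2k` points, and there are `(2n - 2k - 1)‼` of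
those.  Hence the number of diagrams with a bubble starting at `a` is `(2n-1)‼ - (2n-3)‼` for
`a = 1`, `0` for `a = 2`, `(2n-3)‼ - (2n-5)‼` for `3 ≤ a ≤ 2n-1` and `(2n-3)‼` for `a = 2n`,
and these add up to `(4n-5)(2n-3)‼ = (2n-2)! (4n-5) / (2^(n-1) (n-1)!)`. -/

open scoped Nat

section FixedPointFreeInvolution

variable {α : Type*}

def IsFixedPointFreeInvolution (f : α → α) : Prop := ∀ x, f (f x) = x ∧ f x ≠ x

variable [DecidableEq α]

def IsFixedPointFreeInvolution.removePairEquiv (u v : α) (huv : u ≠ v) :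
    {f : α → α // IsFixedPointFreeInvolution f ∧ f u = v} ≃
      {g : {x // x ≠ u ∧ x ≠ v} → {x // x ≠ u ∧ x ≠ v} // IsFixedPointFreeInvolution g} where
  toFun f :=
    have hfv : f.1 v = u := (congrArg f.1 f.2.2).symm.trans (f.2.1 u).1
    ⟨fun x => ⟨f.1 x, fun h => x.2.2 (by rw [← (f.2.1 x).1, h, f.2.2]),
        fun h => x.2.1 (by rw [← (f.2.1 x).1, h, hfv])⟩,
      fun x => ⟨Subtype.ext (f.2.1 x).1, fun h => (f.2.1 x).2 (congrArg Subtype.val h)⟩⟩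
  invFun g := by
    refine ⟨fun x => if h₁ : x = u then v else if h₂ : x = v then u else g.1 ⟨x, h₁, h₂⟩,
      fun x => ⟨?_, ?_⟩, by simp⟩
    · by_cases h₁ : x = u
      · simp [h₁, huv.symm]
      by_cases h₂ : x = v
      · simp [h₂, huv.symm]
      · simp [h₁, h₂, (g.1 ⟨x, h₁, h₂⟩).2.1, (g.1 ⟨x, h₁, h₂⟩).2.2, (g.2 _).1]
    · by_cases h₁ : x = u
      · simp [h₁, huv.symm]
      by_cases h₂ : x = v
      · simp [h₂, huv, huv.symm]
      · simpa [h₁, h₂, Subtype.ext_iff] using (g.2 ⟨x, h₁, h₂⟩).2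
  left_inv f := by
    obtain ⟨f, hf, hfu⟩ := f
    have hfv : f v = u := (congrArg f hfu).symm.trans (hf u).1
    ext x
    by_cases h₁ : x = u
    · simp [h₁, hfu]
    by_cases h₂ : x = v
    · simp [h₂, hfv, huv.symm]
    · simp [h₁, h₂]
  right_inv g := by
    ext x
    simp [x.2.1, x.2.2]

@[simp]
lemma IsFixedPointFreeInvolution.removePairEquiv_apply_coe {u v : α} (huv : u ≠ v)
    (f : {f : α → α // IsFixedPointFreeInvolution f ∧ f u = v}) (x : {x // x ≠ u ∧ x ≠ v}) :
    ((removePairEquiv u v huv f).1 x : α) = f.1 x :=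
  rfl

variable [Fintype α]

lemma Fintype.card_subtype_ne_and_ne {u v : α} (huv : u ≠ v) :
    Fintype.card {x // x ≠ u ∧ x ≠ v} = Fintype.card α - 2 := by
  have : (univ.filter fun x => x ≠ u ∧ x ≠ v) = (univ.erase u).erase v := by
    ext; simp [and_comm]
  rw [Fintype.card_subtype, this, card_erase_of_mem (by simp [huv.symm]),
    card_erase_of_mem (mem_univ u), card_univ, Nat.sub_sub]

open scoped Classical

theorem IsFixedPointFreeInvolution.card_eq_doubleFactorial {k : ℕ} (h : Fintype.card α = 2 * k) :
    Fintype.card {f : α → α // IsFixedPointFreeInvolution f} = (2 * k - 1)‼ := by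
  induction k generalizing α with
  | zero =>
    have : IsEmpty α := Fintype.card_eq_zero_iff.mp h
    exact Fintype.card_eq_one_iff.mpr
      ⟨⟨id, isEmptyElim⟩, fun f => Subtype.ext (funext isEmptyElim)⟩
  | succ k ih =>
    obtain ⟨a⟩ : Nonempty α := Fintype.card_pos_iff.mp (by omega)
    have hfiber : ∀ v ∈ univ.erase a, #{f : α → α | IsFixedPointFreeInvolution f ∧ f a = v} =
        (2 * k - 1)‼ := fun v hv => by
      have hav : a ≠ v := (ne_of_mem_erase hv).symm
      rw [← Fintype.card_subtype, Fintype.card_congr (removePairEquiv a v hav)]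
      exact ih (by rw [Fintype.card_subtype_ne_and_ne hav, h]; omega)
    rw [Fintype.card_subtype, card_eq_sum_card_fiberwise (f := fun f => f a) (t := univ.erase a)
      (fun f hf => mem_erase.mpr ⟨((mem_filter.mp hf).2 a).2, mem_univ _⟩)]
    simp only [filter_filter]
    rw [sum_congr rfl hfiber, sum_const, card_erase_of_mem (mem_univ a), Finset.card_univ, h,
      smul_eq_mul, show 2 * (k + 1) - 1 = 2 * k + 1 by omega, Nat.doubleFactorial_add_one]

theorem IsFixedPointFreeInvolution.card_apply_eq {u v : α} (huv : u ≠ v) {k : ℕ}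
    (h : Fintype.card α = 2 * k + 2) :
    Fintype.card {f : α → α // IsFixedPointFreeInvolution f ∧ f u = v} = (2 * k - 1)‼ := by
  rw [Fintype.card_congr (removePairEquiv u v huv)]
  exact card_eq_doubleFactorial (by rw [Fintype.card_subtype_ne_and_ne huv, h]; omega)

theorem IsFixedPointFreeInvolution.card_apply_eq_and_apply_eq {u₁ v₁ u₂ v₂ : α}
    (h₁ : u₁ ≠ v₁) (h₂ : u₂ ≠ v₂) (hu₁ : u₂ ≠ u₁) (hv₁ : u₂ ≠ v₁) (hu₂ : v₂ ≠ u₁)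
    (hv₂ : v₂ ≠ v₁) {k : ℕ} (h : Fintype.card α = 2 * k + 4) :
    Fintype.card {f : α → α // IsFixedPointFreeInvolution f ∧ f u₁ = v₁ ∧ f u₂ = v₂} =
      (2 * k - 1)‼ := by
  let e : {f : α → α // IsFixedPointFreeInvolution f ∧ f u₁ = v₁ ∧ f u₂ = v₂} ≃
      {g : {x // x ≠ u₁ ∧ x ≠ v₁} → {x // x ≠ u₁ ∧ x ≠ v₁} //
        IsFixedPointFreeInvolution g ∧ g ⟨u₂, hu₁, hv₁⟩ = ⟨v₂, hu₂, hv₂⟩} :=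
    (Equiv.subtypeEquivRight fun f => and_assoc.symm).trans <|
      (Equiv.subtypeSubtypeEquivSubtypeInter _ (fun f => f u₂ = v₂)).symm.trans <|
        (Equiv.subtypeEquiv (removePairEquiv u₁ v₁ h₁) fun f => by simp [Subtype.ext_iff]).trans <|
          Equiv.subtypeSubtypeEquivSubtypeInter _ _
  rw [Fintype.card_congr e]
  exact card_apply_eq (fun h => h₂ (congrArg Subtype.val h))
    (by rw [Fintype.card_subtype_ne_and_ne h₁, h]; omega)

end FixedPointFreeInvolution

section ChordDiagram

variable {n i a b b' : ℕ} {f : Fin (2*n) → Fin (2*n)}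

lemma IsShort.one_le (h : IsShort n f i) : 1 ≤ i := h.1

lemma IsShort.lt (h : IsShort n f i) : i < 2 * n := h.2.1

lemma isShort_iff (h₁ : 1 ≤ i) (h₂ : i < 2 * n) :
    IsShort n f i ↔ f ⟨i - 1, by omega⟩ = ⟨i, h₂⟩ :=
  ⟨fun ⟨_, _, h⟩ => h, fun h => ⟨h₁, h₂, h⟩⟩

lemma IsShort.not_isShort_add_one (hf : IsLCD n f) (h : IsShort n f i) :
    ¬ IsShort n f (i + 1) := by
  obtain ⟨_, _, hshort⟩ := h
  rintro ⟨_, hi, hshort'⟩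
  have hback : f ⟨i, by omega⟩ = ⟨i - 1, by omega⟩ := by rw [← hshort]; exact (hf _).1
  have := congrArg Fin.val (hback.symm.trans hshort')
  simp only at this
  omega

lemma IsBubble.not_isShort_left (hf : IsLCD n f) (h : IsBubble n f a b) : ¬ IsShort n f a := by
  obtain ⟨-, hab, -, hno, -, hright⟩ := h
  intro hs
  rcases Nat.lt_or_ge a b with hlt | hle
  · exact hno a le_rfl hlt hs
  · obtain rfl : b = a := by omega
    rcases hright with rfl | hs'
    · exact absurd hs.lt (lt_irrefl _)
    · exact hs.not_isShort_add_one hf hs'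

lemma IsBubble.le_right (hf : IsLCD n f) (h : IsBubble n f a b) (h' : IsBubble n f a b') :
    b' ≤ b := by
  obtain ⟨-, hab, -, -, -, hright⟩ := h
  obtain ⟨-, -, hb', hno', -, hright'⟩ := h'
  by_contra! hlt
  rcases hright with rfl | hs
  · omega
  rcases Nat.lt_or_ge (b + 1) b' with hlt' | hle
  · exact hno' (b + 1) (by omega) hlt' hs
  · obtain rfl : b' = b + 1 := by omega
    rcases hright' with h2n | hs'
    · exact absurd hs.lt (by omega)
    · exact hs.not_isShort_add_one hf hs'

lemma IsBubble.right_unique (hf : IsLCD n f) (h : IsBubble n f a b) (h' : IsBubble n f a b') :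
    b = b' :=
  le_antisymm (h'.le_right hf h) (h.le_right hf h')

open scoped Classical in
lemma exists_isBubble_iff (hf : IsLCD n f) :
    (∃ b, IsBubble n f a b) ↔
      1 ≤ a ∧ a ≤ 2 * n ∧ (a = 1 ∨ IsShort n f (a - 2)) ∧ ¬ IsShort n f a := by
  refine ⟨fun ⟨_, h⟩ => ⟨h.1, h.2.1.trans h.2.2.1, h.2.2.2.2.1, h.not_isShort_left hf⟩, ?_⟩
  rintro ⟨ha, ha', hleft, hna⟩
  by_cases hshort : ∃ i, a ≤ i ∧ IsShort n f i
  · -- the bubble ends just before the first short chord to the right of `a`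
    obtain ⟨hai, hi⟩ := Nat.find_spec hshort
    have hmin : ∀ j, a ≤ j ∧ IsShort n f j → Nat.find hshort ≤ j := fun _ => Nat.find_min' hshort
    have hlt : a < Nat.find hshort := lt_of_le_of_ne hai fun h => hna (h ▸ hi)
    refine ⟨Nat.find hshort - 1, ha, by omega, by have := hi.lt; omega,
      fun j haj hj hj' => ?_, hleft, Or.inr ?_⟩
    · have := hmin j ⟨haj, hj'⟩; omega
    · rwa [Nat.sub_add_cancel (by omega)]
  · simp only [not_exists, not_and] at hshort
    exact ⟨2 * n, ha, ha', le_rfl, fun j haj _ => hshort j haj, hleft, Or.inl rfl⟩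

end ChordDiagram

lemma Finset.card_filter_and_add_card_filter_and_not {α : Type*} (s : Finset α)
    (p q : α → Prop) [DecidablePred p] [DecidablePred q] :
    #{x ∈ s | p x ∧ q x} + #{x ∈ s | p x ∧ ¬ q x} = #{x ∈ s | p x} := by
  rw [← filter_filter, ← filter_filter, card_filter_add_card_filter_not]

section Counting

open scoped Classical

variable {n i a : ℕ}

lemma card_isLCD : #{f : Fin (2*n) → Fin (2*n) | IsLCD n f} = (2 * n - 1)‼ := by
  rw [← Fintype.card_subtype]
  exact IsFixedPointFreeInvolution.card_eq_doubleFactorial (by simp)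

lemma card_isLCD_isShort (h₁ : 1 ≤ i) (h₂ : i < 2 * n) :
    #{f : Fin (2*n) → Fin (2*n) | IsLCD n f ∧ IsShort n f i} = (2 * n - 3)‼ := by
  rw [← Fintype.card_subtype, Fintype.card_congr (Equiv.subtypeEquivRight fun f =>
    and_congr_right_iff.mpr fun _ => isShort_iff h₁ h₂)]
  refine (IsFixedPointFreeInvolution.card_apply_eq (k := n - 1) ?_ ?_).trans ?_
  · simp [Fin.ext_iff]; omega
  · simp; omega
  · congr 1; omega

lemma card_isLCD_isShort_isShort (h₁ : 1 ≤ i) (h₂ : i + 2 < 2 * n) :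
    #{f : Fin (2*n) → Fin (2*n) | IsLCD n f ∧ IsShort n f i ∧ IsShort n f (i + 2)} =
      (2 * n - 5)‼ := by
  rw [← Fintype.card_subtype, Fintype.card_congr (Equiv.subtypeEquivRight fun f =>
    and_congr_right_iff.mpr fun _ => and_congr (isShort_iff (n := n) h₁ (by omega))
      (isShort_iff (by omega) h₂))]
  refine (IsFixedPointFreeInvolution.card_apply_eq_and_apply_eq (k := n - 2) ?_ ?_ ?_ ?_ ?_ ?_
    ?_).trans ?_
  all_goals first | (congr 1; omega) | (simp [Fin.ext_iff] <;> omega)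

lemma card_exists_isBubble (ha : 1 ≤ a) (ha' : a ≤ 2 * n) :
    #{f : Fin (2*n) → Fin (2*n) | IsLCD n f ∧ ∃ b, IsBubble n f a b} =
      #{f : Fin (2*n) → Fin (2*n) | IsLCD n f ∧ (a = 1 ∨ IsShort n f (a - 2)) ∧ ¬ IsShort n f a} :=
  congrArg card <| filter_congr fun f _ => and_congr_right fun hf => by
    rw [exists_isBubble_iff hf]; simp [ha, ha']

lemma card_exists_isBubble_one (hn : 1 ≤ n) :
    #{f : Fin (2*n) → Fin (2*n) | IsLCD n f ∧ ∃ b, IsBubble n f 1 b} + (2 * n - 3)‼ =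
      (2 * n - 1)‼ := by
  have h := card_filter_and_add_card_filter_and_not univ (IsLCD n) (IsShort n · 1)
  rw [card_isLCD_isShort le_rfl (by omega), card_isLCD] at h
  rw [card_exists_isBubble le_rfl (by omega), ← h, add_comm]
  simp

lemma card_exists_isBubble_two :
    #{f : Fin (2*n) → Fin (2*n) | IsLCD n f ∧ ∃ b, IsBubble n f 2 b} = 0 := by
  simp only [card_eq_zero, filter_eq_empty_iff]
  rintro f - ⟨hf, hb⟩
  obtain ⟨-, -, h | h, -⟩ := (exists_isBubble_iff hf).mp hb
  · omega
  · exact absurd h.one_le (by omega)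

lemma card_exists_isBubble_of_three_le (ha : 3 ≤ a) (ha' : a < 2 * n) :
    #{f : Fin (2*n) → Fin (2*n) | IsLCD n f ∧ ∃ b, IsBubble n f a b} + (2 * n - 5)‼ =
      (2 * n - 3)‼ := by
  obtain ⟨i, rfl⟩ : ∃ i, a = i + 2 := ⟨a - 2, by omega⟩
  have h := card_filter_and_add_card_filter_and_not univ
    (fun f => IsLCD n f ∧ IsShort n f i) (IsShort n · (i + 2))
  simp only [and_assoc] at h
  rw [card_isLCD_isShort_isShort (by omega) ha', card_isLCD_isShort (by omega) (by omega)] at h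
  rw [card_exists_isBubble (by omega) (by omega), ← h, add_comm]
  simp [show i + 2 ≠ 1 by omega]

lemma card_exists_isBubble_two_mul (hn : 2 ≤ n) :
    #{f : Fin (2*n) → Fin (2*n) | IsLCD n f ∧ ∃ b, IsBubble n f (2 * n) b} = (2 * n - 3)‼ := by
  rw [card_exists_isBubble (by omega) le_rfl, ← card_isLCD_isShort (i := 2 * n - 2) (by omega)
    (by omega)]
  refine congrArg card <| filter_congr fun f _ => ?_
  have : ¬ IsShort n f (2 * n) := fun h => absurd h.lt (lt_irrefl _)
  simp [show 2 * n ≠ 1 by omega, this]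

end Counting

section TotalBubbles

open scoped Classical

variable {n : ℕ}

noncomputable def bubbles (n : ℕ) : Finset ((Fin (2*n) → Fin (2*n)) × ℕ × ℕ) :=
  {x ∈ univ ×ˢ (Icc 1 (2*n) ×ˢ Icc 1 (2*n)) | IsLCD n x.1 ∧ IsBubble n x.1 x.2.1 x.2.2}

lemma mem_bubbles {x : (Fin (2*n) → Fin (2*n)) × ℕ × ℕ} :
    x ∈ bubbles n ↔ IsLCD n x.1 ∧ IsBubble n x.1 x.2.1 x.2.2 := by
  simp only [bubbles, mem_filter, mem_product, mem_univ, mem_Icc, true_and, and_iff_right_iff_imp]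
  rintro ⟨-, ha, hab, hb, -⟩
  omega

lemma sum_B_eq_card_bubbles : ∑ p ∈ Icc 1 (2 * n), B n p = #(bubbles n) := by
  rw [card_eq_sum_card_fiberwise (f := fun x => x.2.2 - x.2.1 + 1) (t := Icc 1 (2 * n))]
  · refine sum_congr rfl fun p _ => ?_
    simp only [B, bubbles, filter_filter, and_assoc]
  · intro x hx
    obtain ⟨-, ha, hab, hb, -⟩ := mem_bubbles.mp hx
    simp only [mem_coe, mem_Icc]
    omega

lemma card_bubbles :
    #(bubbles n) = ∑ a ∈ Icc 1 (2 * n),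
      #{f : Fin (2*n) → Fin (2*n) | IsLCD n f ∧ ∃ b, IsBubble n f a b} := by
  rw [card_eq_sum_card_fiberwise (f := fun x => x.2.1) (t := Icc 1 (2 * n))]
  · refine sum_congr rfl fun a _ => card_bij (fun x _ => x.1) ?_ ?_ ?_
    · intro x hx
      obtain ⟨hxb, rfl⟩ := mem_filter.mp hx
      exact mem_filter.mpr ⟨mem_univ _, (mem_bubbles.mp hxb).1, _, (mem_bubbles.mp hxb).2⟩
    · intro x hx y hy hxy
      obtain ⟨hxb, rfl⟩ := mem_filter.mp hx
      obtain ⟨hyb, hya⟩ := mem_filter.mp hy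
      obtain ⟨hf, hb⟩ := mem_bubbles.mp hxb
      rw [hxy, ← hya] at hb
      exact Prod.ext hxy (Prod.ext hya.symm (hb.right_unique (hxy ▸ hf) (mem_bubbles.mp hyb).2))
    · intro f hf
      obtain ⟨hf, b, hb⟩ := (mem_filter.mp hf).2
      exact ⟨(f, a, b), mem_filter.mpr ⟨mem_bubbles.mpr ⟨hf, hb⟩, rfl⟩, rfl⟩
  · intro x hx
    obtain ⟨-, ha, hab, hb, -⟩ := mem_bubbles.mp hx
    simp only [mem_coe, mem_Icc]
    omega

lemma sum_card_exists_isBubble (hn : 2 ≤ n) :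
    ∑ a ∈ Icc 1 (2 * n), #{f : Fin (2*n) → Fin (2*n) | IsLCD n f ∧ ∃ b, IsBubble n f a b} =
      (4 * n - 5) * (2 * n - 3)‼ := by
  have hsplit : Icc 1 (2 * n) = insert 1 (insert 2 (insert (2 * n) (Icc 3 (2 * n - 1)))) := by
    ext; simp only [mem_insert, mem_Icc]; omega
  have hone := card_exists_isBubble_one (n := n) (by omega)
  have hmid := sum_congr (s₁ := Icc 3 (2 * n - 1)) rfl fun a ha =>
    card_exists_isBubble_of_three_le (n := n) (mem_Icc.mp ha).1
      (by have := (mem_Icc.mp ha).2; omega)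
  rw [sum_add_distrib, sum_const, sum_const, Nat.card_Icc, smul_eq_mul, smul_eq_mul] at hmid
  rw [hsplit, sum_insert (by simp only [mem_insert, mem_Icc]; omega),
    sum_insert (by simp only [mem_insert, mem_Icc]; omega),
    sum_insert (by simp only [mem_Icc]; omega), card_exists_isBubble_two, card_exists_isBubble_two_mul hn]
  obtain ⟨k, rfl⟩ : ∃ k, n = k + 2 := ⟨n - 2, by omega⟩
  obtain ⟨h₁, h₂, h₃, h₄, h₅⟩ : 2 * (k + 2) - 1 = 2 * k + 1 + 2 ∧ 2 * (k + 2) - 3 = 2 * k + 1 ∧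
      2 * (k + 2) - 5 = 2 * k - 1 ∧ 2 * (k + 2) - 1 + 1 - 3 = 2 * k + 1 ∧
      4 * (k + 2) - 5 = 4 * k + 3 := by omega
  rw [h₁, h₂, Nat.doubleFactorial_add_two] at hone
  rw [h₂, h₃, h₄, ← Nat.doubleFactorial_add_one] at hmid
  rw [h₂, h₅]
  linarith

end TotalBubbles

lemma Nat.factorial_two_mul_eq (m : ℕ) : (2 * m)! = 2 ^ m * m ! * (2 * m - 1)‼ := by
  cases m with
  | zero => rfl
  | succ m =>
    rw [show 2 * (m + 1) = 2 * m + 1 + 1 by ring, Nat.factorial_eq_mul_doubleFactorial,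
      show 2 * m + 1 + 1 = 2 * (m + 1) by ring, Nat.doubleFactorial_two_mul,
      show 2 * (m + 1) - 1 = 2 * m + 1 by omega]

/-- For every `n ≥ 2`, the total number of bubbles across all linear chord diagrams on
`2n` vertices is `(2n-2)!·(4n-5) / (2^{n-1}·(n-1)!)`. -/
theorem total_bubbles (n : ℕ) (hn : 2 ≤ n) :
    (∑ p ∈ Finset.Icc 1 (2*n), (B n p : ℚ)) =
      (((2*n-2).factorial * (4*n-5) : ℕ) : ℚ) /
        ((2^(n-1) * (n-1).factorial : ℕ) : ℚ) := by
  have hden : ((2 ^ (n - 1) * (n - 1)! : ℕ) : ℚ) ≠ 0 := by positivity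
  rw [eq_div_iff hden, ← Nat.cast_sum, ← Nat.cast_mul, Nat.cast_inj, sum_B_eq_card_bubbles,
    card_bubbles, sum_card_exists_isBubble hn, show 2 * n - 2 = 2 * (n - 1) by omega,
    Nat.factorial_two_mul_eq, show 2 * (n - 1) - 1 = 2 * n - 3 by omega]
  ring
end

section
/- For every integer n ≥ 2, the number of bubbles of size 2n-2 among linear chord diagrams on 2n vertices equals twice the number of linear chord diagrams on 2n-2 vertices with no short chords; that is, B_{n,2n-2} = 2·d_{n-1,0}. -/
open Finset

/-! ### Auxiliary lemmas -/

lemma not_isShort_zero (n : ℕ) (f : Fin (2*n) → Fin (2*n)) : ¬ IsShort n f 0 := by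
  rintro ⟨h1, -⟩; omega

lemma fval_congr {n : ℕ} (f : Fin (2*n) → Fin (2*n)) {x y : Fin (2*n)}
    (h : x.val = y.val) : (f x).val = (f y).val := by
  rw [Fin.ext h]

/-! ### Reversal -/

def revv (n : ℕ) (i : Fin (2*n)) : Fin (2*n) := ⟨2*n-1-i.val, by have := i.isLt; omega⟩

lemma revv_revv (n : ℕ) (i : Fin (2*n)) : revv n (revv n i) = i := by
  have := i.isLt; apply Fin.ext; simp [revv]; omega

def revMap (n : ℕ) (f : Fin (2*n) → Fin (2*n)) : Fin (2*n) → Fin (2*n) :=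
  fun i => revv n (f (revv n i))

lemma revMap_revMap (n : ℕ) (f : Fin (2*n) → Fin (2*n)) : revMap n (revMap n f) = f :=
  funext fun i => by simp [revMap, revv_revv]

lemma isLCD_revMap {n : ℕ} {f : Fin (2*n) → Fin (2*n)} (hf : IsLCD n f) :
    IsLCD n (revMap n f) := by
  intro i
  constructor
  · show revv n (f (revv n (revv n (f (revv n i))))) = i
    rw [revv_revv, (hf _).1, revv_revv]
  · intro h
    have h2 := congrArg (revv n) h
    show False
    rw [revMap, revv_revv] at h2
    exact (hf (revv n i)).2 h2

lemma isShort_revMap {n : ℕ} {f : Fin (2*n) → Fin (2*n)} (hf : IsLCD n f) {i : ℕ}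
    (h : IsShort n f i) : IsShort n (revMap n f) (2*n - i) := by
  obtain ⟨h1, h2, heq⟩ := h
  have hinv : f ⟨i, h2⟩ = ⟨i-1, by omega⟩ := by
    have h3 := (hf ⟨i-1, by omega⟩).1
    rw [heq] at h3
    exact h3
  refine ⟨by omega, by omega, ?_⟩
  show revv n (f (revv n _)) = _
  have e1 : revv n ⟨2*n-i-1, by omega⟩ = ⟨i, h2⟩ := by apply Fin.ext; simp [revv]; omega
  rw [e1, hinv]
  apply Fin.ext; simp [revv]; omega

/-! ### Truncation and extension -/

def trunc (n : ℕ) (f : Fin (2*n) → Fin (2*n)) : Fin (2*(n-1)) → Fin (2*(n-1)) :=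
  fun k => if h : (f ⟨k.val, by have := k.isLt; omega⟩).val < 2*(n-1) then ⟨_, h⟩ else k

def ext2 (n : ℕ) (g : Fin (2*(n-1)) → Fin (2*(n-1))) : Fin (2*n) → Fin (2*n) :=
  fun k => if h : k.val < 2*(n-1) then
      ⟨(g ⟨k.val, h⟩).val, by have := (g ⟨k.val, h⟩).isLt; have := k.isLt; omega⟩
    else if k.val = 2*n-2 then ⟨2*n-1, by have := k.isLt; omega⟩
    else ⟨2*n-2, by have := k.isLt; omega⟩

lemma trunc_val {n : ℕ} {f : Fin (2*n) → Fin (2*n)}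
    (hsmall : ∀ k : Fin (2*n), k.val < 2*(n-1) → (f k).val < 2*(n-1))
    (k : Fin (2*(n-1))) (j : Fin (2*n)) (hj : j.val = k.val) :
    (trunc n f k).val = (f j).val := by
  have e : (f j).val = (f ⟨k.val, by have := k.isLt; omega⟩).val :=
    fval_congr f (by simpa using hj)
  rw [e]
  simp only [trunc]
  split
  · rfl
  · next h =>
    exact absurd (hsmall ⟨k.val, by have := k.isLt; omega⟩ (by simpa using k.isLt)) h

lemma ext2_val_lt {n : ℕ} (g : Fin (2*(n-1)) → Fin (2*(n-1))) (k : Fin (2*n))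
    (h : k.val < 2*(n-1)) (j : Fin (2*(n-1))) (hj : j.val = k.val) :
    (ext2 n g k).val = (g j).val := by
  have e : (g j).val = (g ⟨k.val, h⟩).val := fval_congr g (by simpa using hj)
  rw [e]
  simp only [ext2, dif_pos h]

lemma ext2_val_hi1 {n : ℕ} (g : Fin (2*(n-1)) → Fin (2*(n-1))) (k : Fin (2*n))
    (hn : 2 ≤ n) (hk : k.val = 2*n-2) : (ext2 n g k).val = 2*n-1 := by
  simp only [ext2]
  rw [dif_neg (by omega), if_pos hk]

lemma ext2_val_hi2 {n : ℕ} (g : Fin (2*(n-1)) → Fin (2*(n-1))) (k : Fin (2*n))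
    (hn : 2 ≤ n) (hk : k.val = 2*n-1) : (ext2 n g k).val = 2*n-2 := by
  simp only [ext2]
  rw [dif_neg (by omega), if_neg (by omega)]

lemma S1_facts {n : ℕ} (hn : 2 ≤ n) {f : Fin (2*n) → Fin (2*n)}
    (hf : IsLCD n f) (hb : IsBubble n f 1 (2*n-2)) :
    (f ⟨2*n-2, by omega⟩).val = 2*n-1 ∧ (f ⟨2*n-1, by omega⟩).val = 2*n-2 ∧
    ∀ k : Fin (2*n), k.val < 2*(n-1) → (f k).val < 2*(n-1) := by
  obtain ⟨-, -, -, hno, -, hright⟩ := hb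
  have hS : IsShort n f (2*n-2+1) := hright.resolve_left (by omega)
  obtain ⟨h0, h2, heq⟩ := hS
  have hv : (f ⟨2*n-2+1-1, by omega⟩).val = 2*n-2+1 := by rw [heq]
  have h1 : (f ⟨2*n-2, by omega⟩).val = 2*n-1 := by
    calc (f ⟨2*n-2, by omega⟩).val
        = (f ⟨2*n-2+1-1, by omega⟩).val :=
          fval_congr f (by show 2*n-2 = 2*n-2+1-1; omega)
      _ = 2*n-2+1 := hv
      _ = 2*n-1 := by omega
  have hinv : (f ⟨2*n-1, by omega⟩).val = 2*n-2 := by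
    have h3 := congrArg Fin.val (hf ⟨2*n-2, by omega⟩).1
    have e : (f ⟨2*n-2, by omega⟩) = (⟨2*n-1, by omega⟩ : Fin (2*n)) := Fin.ext (by simpa using h1)
    rw [e] at h3
    simpa using h3
  refine ⟨h1, hinv, ?_⟩
  intro k hk
  by_contra hge
  push_neg at hge
  have hlt := (f k).isLt
  have hik := congrArg Fin.val (hf k).1
  rcases Nat.lt_or_ge (f k).val (2*n-1) with h | h
  · have e : f k = (⟨2*n-2, by omega⟩ : Fin (2*n)) := Fin.ext (by simp; omega)
    rw [e, h1] at hik
    omega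
  · have e : f k = (⟨2*n-1, by omega⟩ : Fin (2*n)) := Fin.ext (by simp; omega)
    rw [e, hinv] at hik
    omega

open scoped Classical in
lemma card_S1 (n : ℕ) (hn : 2 ≤ n) :
    (univ.filter (fun f : Fin (2*n) → Fin (2*n) =>
      IsLCD n f ∧ IsBubble n f 1 (2*n-2))).card = d (n-1) 0 := by
  unfold d
  apply Finset.card_bij' (fun f _ => trunc n f) (fun g _ => ext2 n g)
  · -- hi : forward membership
    rintro f hf
    simp only [mem_filter, mem_univ, true_and] at hf ⊢
    obtain ⟨hlcd, hbub⟩ := hf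
    obtain ⟨h1, h2, hsmall⟩ := S1_facts hn hlcd hbub
    constructor
    · intro k
      have hk : k.val < 2*n := by have := k.isLt; omega
      have t1 : (trunc n f k).val = (f ⟨k.val, hk⟩).val := trunc_val hsmall k ⟨k.val, hk⟩ rfl
      have t2 : (trunc n f (trunc n f k)).val = (f (f ⟨k.val, hk⟩)).val :=
        trunc_val hsmall (trunc n f k) (f ⟨k.val, hk⟩) t1.symm
      have t3 := t2.trans (congrArg Fin.val (hlcd ⟨k.val, hk⟩).1)
      constructor
      · exact Fin.ext t3
      · intro hcon
        have hv := congrArg Fin.val hcon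
        rw [t1] at hv
        exact (hlcd ⟨k.val, hk⟩).2 (Fin.ext hv)
    · rw [Finset.card_eq_zero, Finset.filter_eq_empty_iff]
      intro i hi
      rw [Finset.mem_Icc] at hi
      rintro ⟨hi1, hi2, heq⟩
      have hv := congrArg Fin.val heq
      simp only at hv
      have hlt : i - 1 < 2*n := by omega
      have t1 : (trunc n f ⟨i-1, by omega⟩).val = (f ⟨i-1, hlt⟩).val :=
        trunc_val hsmall _ ⟨i-1, hlt⟩ rfl
      rw [t1] at hv
      refine hbub.2.2.2.1 i hi1 (by omega) ⟨hi1, by omega, ?_⟩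
      exact Fin.ext (by simpa using hv)
  · -- hj : backward membership
    rintro g hg
    simp only [mem_filter, mem_univ, true_and] at hg ⊢
    obtain ⟨hlcd, hcard⟩ := hg
    rw [Finset.card_eq_zero, Finset.filter_eq_empty_iff] at hcard
    have hnoshort : ∀ i, 1 ≤ i → i ≤ 2*(n-1)-1 → ¬ IsShort (n-1) g i := by
      intro i hi1 hi2
      exact hcard (Finset.mem_Icc.mpr ⟨hi1, hi2⟩)
    constructor
    · intro k
      rcases Nat.lt_or_ge k.val (2*(n-1)) with h | h
      · have t1 : (ext2 n g k).val = (g ⟨k.val, h⟩).val := ext2_val_lt g k h ⟨k.val, h⟩ rfl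
        have h' : (ext2 n g k).val < 2*(n-1) := by rw [t1]; exact (g ⟨k.val, h⟩).isLt
        have t2 : (ext2 n g (ext2 n g k)).val = (g (g ⟨k.val, h⟩)).val :=
          ext2_val_lt g (ext2 n g k) h' (g ⟨k.val, h⟩) t1.symm
        have t3 := t2.trans (congrArg Fin.val (hlcd ⟨k.val, h⟩).1)
        constructor
        · exact Fin.ext t3
        · intro hcon
          have hv := congrArg Fin.val hcon
          rw [t1] at hv
          exact (hlcd ⟨k.val, h⟩).2 (Fin.ext hv)
      · have hk2 : k.val = 2*n-2 ∨ k.val = 2*n-1 := by have := k.isLt; omega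
        rcases hk2 with hk | hk
        · have t1 : (ext2 n g k).val = 2*n-1 := ext2_val_hi1 g k hn hk
          have t2 : (ext2 n g (ext2 n g k)).val = 2*n-2 := ext2_val_hi2 g _ hn t1
          exact ⟨Fin.ext (by omega : (ext2 n g (ext2 n g k)).val = k.val),
            fun hcon => by have := congrArg Fin.val hcon; omega⟩
        · have t1 : (ext2 n g k).val = 2*n-2 := ext2_val_hi2 g k hn hk
          have t2 : (ext2 n g (ext2 n g k)).val = 2*n-1 := ext2_val_hi1 g _ hn t1
          exact ⟨Fin.ext (by omega : (ext2 n g (ext2 n g k)).val = k.val),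
            fun hcon => by have := congrArg Fin.val hcon; omega⟩
    · refine ⟨by omega, by omega, by omega, ?_, Or.inl rfl, Or.inr ?_⟩
      · intro i hi1 hi2
        rintro ⟨h1', h2', heq⟩
        have hv := congrArg Fin.val heq
        simp only at hv
        have hlt : i - 1 < 2*(n-1) := by omega
        have t1 : (ext2 n g ⟨i-1, by omega⟩).val = (g ⟨i-1, hlt⟩).val :=
          ext2_val_lt g _ hlt ⟨i-1, hlt⟩ rfl
        rw [t1] at hv
        refine hnoshort i hi1 (by omega) ⟨hi1, by omega, ?_⟩
        exact Fin.ext (by simpa using hv)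
      · refine ⟨by omega, by omega, ?_⟩
        apply Fin.ext
        have t1 : (ext2 n g ⟨2*n-2+1-1, by omega⟩).val = 2*n-1 :=
          ext2_val_hi1 g _ hn (by show 2*n-2+1-1 = 2*n-2; omega)
        refine Eq.trans t1 ?_
        show 2*n-1 = 2*n-2+1
        omega
  · -- left inverse
    rintro f hf
    simp only [mem_filter, mem_univ, true_and] at hf
    obtain ⟨hlcd, hbub⟩ := hf
    obtain ⟨h1, h2, hsmall⟩ := S1_facts hn hlcd hbub
    funext k
    apply Fin.ext
    rcases Nat.lt_or_ge k.val (2*(n-1)) with h | h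
    · have t1 : (ext2 n (trunc n f) k).val = (trunc n f ⟨k.val, h⟩).val :=
        ext2_val_lt (trunc n f) k h ⟨k.val, h⟩ rfl
      have t2 : (trunc n f ⟨k.val, h⟩).val = (f k).val := trunc_val hsmall ⟨k.val, h⟩ k rfl
      rw [t1, t2]
    · have hk2 : k.val = 2*n-2 ∨ k.val = 2*n-1 := by have := k.isLt; omega
      rcases hk2 with hk | hk
      · rw [ext2_val_hi1 (trunc n f) k hn hk]
        rw [fval_congr f (show k.val = (⟨2*n-2, by omega⟩ : Fin (2*n)).val by simpa using hk), h1]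
      · rw [ext2_val_hi2 (trunc n f) k hn hk]
        rw [fval_congr f (show k.val = (⟨2*n-1, by omega⟩ : Fin (2*n)).val by simpa using hk), h2]
  · -- right inverse
    rintro g hg
    funext k
    apply Fin.ext
    have hsmall' : ∀ j : Fin (2*n), j.val < 2*(n-1) → (ext2 n g j).val < 2*(n-1) := by
      intro j hj
      rw [ext2_val_lt g j hj ⟨j.val, hj⟩ rfl]
      exact (g ⟨j.val, hj⟩).isLt
    have hk : k.val < 2*n := by have := k.isLt; omega
    have t1 : (trunc n (ext2 n g) k).val = (ext2 n g ⟨k.val, hk⟩).val :=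
      trunc_val hsmall' k ⟨k.val, hk⟩ rfl
    have t2 : (ext2 n g ⟨k.val, hk⟩).val = (g k).val :=
      ext2_val_lt g ⟨k.val, hk⟩ (by simpa using k.isLt) k rfl
    rw [t1, t2]

open scoped Classical in
lemma card_S3 (n : ℕ) (hn : 2 ≤ n) :
    (univ.filter (fun f : Fin (2*n) → Fin (2*n) =>
      IsLCD n f ∧ IsBubble n f 3 (2*n))).card
    = (univ.filter (fun f : Fin (2*n) → Fin (2*n) =>
      IsLCD n f ∧ IsBubble n f 1 (2*n-2))).card := by
  apply Finset.card_bij' (fun f _ => revMap n f) (fun f _ => revMap n f)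
  · rintro f hf
    simp only [mem_filter, mem_univ, true_and] at hf ⊢
    obtain ⟨hlcd, -, -, -, hno, hleft, -⟩ := hf
    refine ⟨isLCD_revMap hlcd, by omega, by omega, by omega, ?_, Or.inl rfl, Or.inr ?_⟩
    · intro i hi1 hi2 hsh
      have hsh' := isShort_revMap (isLCD_revMap hlcd) hsh
      rw [revMap_revMap] at hsh'
      exact hno (2*n - i) (by omega) (by omega) hsh'
    · have h1s : IsShort n f 1 := by
        rcases hleft with h | h
        · omega
        · rwa [show (3:ℕ)-2 = 1 by norm_num] at h
      have hs := isShort_revMap hlcd h1s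
      rwa [show 2*n - 1 = 2*n-2+1 by omega] at hs
  · rintro f hf
    simp only [mem_filter, mem_univ, true_and] at hf ⊢
    obtain ⟨hlcd, -, -, -, hno, -, hright⟩ := hf
    refine ⟨isLCD_revMap hlcd, by omega, by omega, by omega, ?_, Or.inr ?_, Or.inl rfl⟩
    · intro i hi1 hi2 hsh
      have hsh' := isShort_revMap (isLCD_revMap hlcd) hsh
      rw [revMap_revMap] at hsh'
      exact hno (2*n - i) (by omega) (by omega) hsh'
    · have h1s : IsShort n f (2*n-2+1) := hright.resolve_left (by omega)
      rw [show 2*n-2+1 = 2*n-1 by omega] at h1s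
      have hs := isShort_revMap hlcd h1s
      rwa [show 2*n - (2*n-1) = 3-2 by omega] at hs
  · rintro f -; exact revMap_revMap n f
  · rintro f -; exact revMap_revMap n f

/-- For every `n ≥ 2`, the number of bubbles of size `2n-2` equals twice the number of
linear chord diagrams on `2n-2` vertices with no short chords. -/
theorem bubble_size_sub_two (n : ℕ) (hn : 2 ≤ n) : B n (2*n-2) = 2 * d (n-1) 0 := by
  classical
  have hset : ((univ ×ˢ (Finset.Icc 1 (2*n) ×ˢ Finset.Icc 1 (2*n))).filter
      (fun x : (Fin (2*n) → Fin (2*n)) × ℕ × ℕ =>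
        IsLCD n x.1 ∧ IsBubble n x.1 x.2.1 x.2.2 ∧ x.2.2 - x.2.1 + 1 = 2*n-2))
      = ((univ.filter (fun f : Fin (2*n) → Fin (2*n) =>
          IsLCD n f ∧ IsBubble n f 1 (2*n-2))).image (fun f => (f, (1, 2*n-2))))
      ∪ ((univ.filter (fun f : Fin (2*n) → Fin (2*n) =>
          IsLCD n f ∧ IsBubble n f 3 (2*n))).image (fun f => (f, (3, 2*n)))) := by
    ext ⟨f, a, b⟩
    simp only [mem_filter, mem_union, mem_image, mem_product, mem_univ, true_and,
      Finset.mem_Icc, Prod.mk.injEq]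
    constructor
    · rintro ⟨⟨⟨ha1, ha2⟩, hb1, hb2⟩, hlcd, hbub, hsize⟩
      have hbub' := hbub
      obtain ⟨hA, hab, hble, hno, hleft, hright⟩ := hbub'
      have ha : a = 1 ∨ a = 2 ∨ a = 3 := by omega
      rcases ha with ha | ha | ha
      · subst ha
        have hb : b = 2*n-2 := by omega
        subst hb
        exact Or.inl ⟨f, ⟨hlcd, hbub⟩, rfl, rfl, rfl⟩
      · exfalso
        rcases hleft with h | h
        · omega
        · subst ha
          exact not_isShort_zero n f (by rwa [show (2:ℕ)-2 = 0 by norm_num] at h)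
      · subst ha
        have hb : b = 2*n := by omega
        subst hb
        exact Or.inr ⟨f, ⟨hlcd, hbub⟩, rfl, rfl, rfl⟩
    · rintro (⟨g, ⟨hlcd, hbub⟩, rfl, rfl, rfl⟩ | ⟨g, ⟨hlcd, hbub⟩, rfl, rfl, rfl⟩)
      · exact ⟨⟨⟨by omega, by omega⟩, by omega, by omega⟩, hlcd, hbub, by omega⟩
      · exact ⟨⟨⟨by omega, by omega⟩, by omega, by omega⟩, hlcd, hbub, by omega⟩
  have hinj1 : Function.Injective (fun f : Fin (2*n) → Fin (2*n) => (f, ((1:ℕ), 2*n-2))) :=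
    fun a b h => congrArg Prod.fst h
  have hinj3 : Function.Injective (fun f : Fin (2*n) → Fin (2*n) => (f, ((3:ℕ), 2*n))) :=
    fun a b h => congrArg Prod.fst h
  have hdisj : Disjoint
      ((univ.filter (fun f : Fin (2*n) → Fin (2*n) =>
          IsLCD n f ∧ IsBubble n f 1 (2*n-2))).image (fun f => (f, (1, 2*n-2))))
      ((univ.filter (fun f : Fin (2*n) → Fin (2*n) =>
          IsLCD n f ∧ IsBubble n f 3 (2*n))).image (fun f => (f, (3, 2*n)))) := by
    rw [Finset.disjoint_left]
    rintro x hx hx'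
    simp only [mem_image] at hx hx'
    obtain ⟨g, -, rfl⟩ := hx
    obtain ⟨g', -, heq⟩ := hx'
    have := congrArg (fun z => z.2.1) heq
    simp at this
  unfold B
  rw [hset, Finset.card_union_of_disjoint hdisj,
    Finset.card_image_of_injective _ hinj1, Finset.card_image_of_injective _ hinj3,
    card_S3 n hn, card_S1 n hn]
  omega
end

section
/- For every integer n ≥ 3, the number of bubbles of size 2n-3 among linear chord diagrams on 2n vertices satisfies B_{n,2n-3} = 2·((2n-3)·d_{n-2,0} + d_{n-2,1}). -/
open Finset

/-!
A bubble of size `2n-3` leaves only three vertices outside it, so it is either `[1, 2n-3]`,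
followed by the short chord `{2n-2, 2n-1}`, or `[4, 2n]`, preceded by the short chord `{2, 3}`;
the reflection `i ↦ 2n+1-i` exchanges the two cases. In the second case let vertex `1` be
matched with `x + 4`. Deleting the chords `{1, x+4}` and `{2, 3}` is a bijection onto all
diagrams on `2n-4` vertices, and the short chords of the image are those of the bubble, except
possibly a new one joining the two neighbours of the deleted vertex `x + 4`. Hence each of the
`2n-3` values of `x` contributes the diagrams without short chords plus those whose only short
chord sits at position `x`, and summing over `x` gives `(2n-3) d_{n-2,0} + d_{n-2,1}`.
-/

section Basic

variable {n : ℕ} {f : Fin (2*n) → Fin (2*n)}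

lemma IsShort.bounds {i : ℕ} (h : IsShort n f i) : 1 ≤ i ∧ i < 2*n :=
  ⟨h.1, h.2.1⟩

lemma isShort_iff_val {i : ℕ} (h1 : 1 ≤ i) (h2 : i < 2*n) :
    IsShort n f i ↔ (f ⟨i-1, by omega⟩ : ℕ) = i :=
  ⟨fun ⟨_, _, h⟩ => by rw [h], fun h => ⟨h1, h2, Fin.ext h⟩⟩

lemma IsLCD.apply_eq_iff (hf : IsLCD n f) {x y : Fin (2*n)} : f x = y ↔ f y = x :=
  ⟨fun h => h ▸ (hf x).1, fun h => h ▸ (hf y).1⟩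

def mirror {m : ℕ} (f : Fin m → Fin m) : Fin m → Fin m := Fin.rev ∘ f ∘ Fin.rev

@[simp]
lemma mirror_mirror {m : ℕ} (f : Fin m → Fin m) : mirror (mirror f) = f := by
  funext i; simp [mirror]

lemma isLCD_mirror (hf : IsLCD n f) : IsLCD n (mirror f) := fun i => by
  refine ⟨by simp [mirror, (hf i.rev).1], fun h => (hf i.rev).2 ?_⟩
  simpa [mirror, Fin.rev_eq_iff] using h

lemma isShort_mirror_iff (hf : IsLCD n f) (j : ℕ) :
    IsShort n (mirror f) j ↔ IsShort n f (2*n - j) := by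
  by_cases hj : 1 ≤ j ∧ j < 2*n
  · rw [isShort_iff_val hj.1 hj.2, isShort_iff_val (by omega) (by omega)]
    have hrev : Fin.rev (⟨j-1, by omega⟩ : Fin (2*n)) = ⟨2*n - j, by omega⟩ :=
      Fin.ext (by simp only [Fin.val_rev]; omega)
    have hidx : (⟨2*n - j - 1, by omega⟩ : Fin (2*n)) = ⟨2*n - 1 - j, by omega⟩ :=
      Fin.ext (by simp only; omega)
    have key := hf.apply_eq_iff (x := ⟨2*n - j, by omega⟩) (y := ⟨2*n - 1 - j, by omega⟩)
    simp only [mirror, Function.comp_apply, hrev, hidx, Fin.val_rev, Fin.ext_iff] at key ⊢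
    have := (f ⟨2*n - j, by omega⟩).isLt
    omega
  · exact iff_of_false (fun h => hj h.bounds) (fun h => by have := h.bounds; omega)

end Basic

section Bubble

open scoped Classical

variable {n : ℕ} {f : Fin (2*n) → Fin (2*n)}

lemma isBubble_mirror (hf : IsLCD n f) {a b a' b' : ℕ} (h : IsBubble n f a b)
    (ha : a' + b = 2*n + 1) (hb : b' + a = 2*n + 1) : IsBubble n (mirror f) a' b' := by
  obtain ⟨ha1, hab, hb2, hin, hleft, hright⟩ := h
  refine ⟨by omega, by omega, by omega, fun i hi1 hi2 hs => ?_, ?_, ?_⟩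
  · rw [isShort_mirror_iff hf] at hs
    exact hin _ (by omega) (by omega) hs
  · refine hright.imp (by omega) fun hs => ?_
    rwa [isShort_mirror_iff hf, show 2*n - (a' - 2) = b + 1 by have := hs.bounds; omega]
  · refine hleft.imp (by omega) fun hs => ?_
    rwa [isShort_mirror_iff hf, show 2*n - (b' + 1) = a - 2 by have := hs.bounds; omega]

lemma IsBubble.eq_of_size_eq {a b : ℕ} (h : IsBubble n f a b)
    (hp : b - a + 1 = 2*n - 3) : (a = 1 ∧ b = 2*n - 3) ∨ (a = 4 ∧ b = 2*n) := by
  obtain ⟨ha1, hab, hb2, -, hleft, hright⟩ := h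
  rcases hleft with rfl | hl
  · rcases hright with rfl | hr
    · omega
    · have := hr.bounds; omega
  · rcases hright with rfl | hr
    · have := hl.bounds; omega
    · have := hl.bounds; have := hr.bounds; omega

lemma card_isBubble_one_eq_card_isBubble_four (hn : 2 ≤ n) :
    #{f | IsLCD n f ∧ IsBubble n f 1 (2*n - 3)} = #{f | IsLCD n f ∧ IsBubble n f 4 (2*n)} := by
  refine card_nbij' mirror mirror (fun f hf => ?_) (fun f hf => ?_)
    (fun f _ => mirror_mirror f) (fun f _ => mirror_mirror f)
  all_goals
    simp only [coe_filter, mem_univ, true_and, Set.mem_ofPred_eq] at hf ⊢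
    exact ⟨isLCD_mirror hf.1, isBubble_mirror hf.1 hf.2 (by omega) (by omega)⟩

lemma B_two_mul_sub_three :
    B n (2*n - 3) =
      #{f | IsLCD n f ∧ IsBubble n f 1 (2*n - 3)} + #{f | IsLCD n f ∧ IsBubble n f 4 (2*n)} := by
  let head : (Fin (2*n) → Fin (2*n)) → _ × ℕ × ℕ := fun f => (f, 1, 2*n - 3)
  let tail : (Fin (2*n) → Fin (2*n)) → _ × ℕ × ℕ := fun f => (f, 4, 2*n)
  have hsplit : ((univ ×ˢ (Icc 1 (2*n) ×ˢ Icc 1 (2*n))).filter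
      fun x : (Fin (2*n) → Fin (2*n)) × ℕ × ℕ =>
        IsLCD n x.1 ∧ IsBubble n x.1 x.2.1 x.2.2 ∧ x.2.2 - x.2.1 + 1 = 2*n - 3) =
      ({f | IsLCD n f ∧ IsBubble n f 1 (2*n - 3)} : Finset _).image head ∪
        ({f | IsLCD n f ∧ IsBubble n f 4 (2*n)} : Finset _).image tail := by
    ext ⟨f, a, b⟩
    simp only [mem_filter, mem_union, mem_image, mem_product, mem_univ, mem_Icc, true_and,
      head, tail, Prod.mk.injEq]
    constructor
    · rintro ⟨-, hf, hb, hp⟩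
      rcases hb.eq_of_size_eq hp with ⟨rfl, rfl⟩ | ⟨rfl, rfl⟩
      exacts [.inl ⟨f, ⟨hf, hb⟩, rfl, rfl, rfl⟩, .inr ⟨f, ⟨hf, hb⟩, rfl, rfl, rfl⟩]
    · rintro (⟨f, ⟨hf, hb⟩, rfl, rfl, rfl⟩ | ⟨f, ⟨hf, hb⟩, rfl, rfl, rfl⟩) <;>
        refine ⟨?_, hf, hb, ?_⟩ <;> obtain ⟨_, _, _, -⟩ := hb <;> omega
  have hinj : ∀ {a b : ℕ}, Function.Injective
      fun f : Fin (2*n) → Fin (2*n) => (f, a, b) := fun h => congrArg Prod.fst h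
  rw [B, hsplit, card_union_of_disjoint, card_image_of_injective _ hinj,
    card_image_of_injective _ hinj]
  simp only [disjoint_left, mem_image, head, tail]
  rintro _ ⟨f, -, rfl⟩ ⟨g, -, h⟩
  simp only [Prod.mk.injEq] at h
  omega

end Bubble

section Reduction

variable {n x : ℕ}

/-- Position in a diagram on `2n` vertices of vertex `k` of a diagram on `2n - 4` vertices, when
the (0-based) vertices `0, 1, 2, x + 3` are skipped. -/
def liftIdx (x k : ℕ) : ℕ := if k < x then k + 3 else k + 4

def dropIdx (x m : ℕ) : ℕ := if m < x + 3 then m - 3 else m - 4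

lemma dropIdx_liftIdx (k : ℕ) : dropIdx x (liftIdx x k) = k := by
  unfold dropIdx liftIdx; split_ifs <;> omega

lemma liftIdx_dropIdx {m : ℕ} (h3 : 3 ≤ m) (hm : m ≠ x + 3) : liftIdx x (dropIdx x m) = m := by
  unfold dropIdx liftIdx; split_ifs <;> omega

lemma three_le_liftIdx (k : ℕ) : 3 ≤ liftIdx x k := by
  unfold liftIdx; split_ifs <;> omega

lemma liftIdx_ne (k : ℕ) : liftIdx x k ≠ x + 3 := by
  unfold liftIdx; split_ifs <;> omega

lemma liftIdx_sub_one {i : ℕ} (h1 : 1 ≤ i) (hi : i ≠ x) : liftIdx x (i - 1) = liftIdx x i - 1 := by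
  unfold liftIdx; split_ifs <;> omega

def embed (x : ℕ) (k : Fin (2*(n-2))) : Fin (2*n) :=
  ⟨liftIdx x k, by have := k.isLt; unfold liftIdx; split_ifs <;> omega⟩

lemma three_le_embed (k : Fin (2*(n-2))) : 3 ≤ (embed x k : ℕ) := three_le_liftIdx k

lemma val_embed_ne (k : Fin (2*(n-2))) : (embed x k : ℕ) ≠ x + 3 := liftIdx_ne k

variable (hn : 3 ≤ n) (hx : x + 3 < 2*n)

def project (m : Fin (2*n)) : Fin (2*(n-2)) :=
  ⟨dropIdx x m, by have := m.isLt; unfold dropIdx; split_ifs <;> omega⟩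

lemma project_embed (k : Fin (2*(n-2))) : project hn hx (embed x k) = k :=
  Fin.ext (dropIdx_liftIdx k)

lemma embed_project {m : Fin (2*n)} (h3 : 3 ≤ (m : ℕ)) (hm : (m : ℕ) ≠ x + 3) :
    embed x (project hn hx m) = m :=
  Fin.ext (liftIdx_dropIdx h3 hm)

/-- Removes the chords `{1, x + 4}` and `{2, 3}` (1-based) from a diagram. -/
def deleteHead (f : Fin (2*n) → Fin (2*n)) : Fin (2*(n-2)) → Fin (2*(n-2)) :=
  project hn hx ∘ f ∘ embed x

def insertHead (g : Fin (2*(n-2)) → Fin (2*(n-2))) (m : Fin (2*n)) : Fin (2*n) :=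
  if (m : ℕ) = 0 then ⟨x + 3, hx⟩
  else if (m : ℕ) = x + 3 then ⟨0, by omega⟩
  else if (m : ℕ) = 1 then ⟨2, by omega⟩
  else if (m : ℕ) = 2 then ⟨1, by omega⟩
  else embed x (g (project hn hx m))

variable {g : Fin (2*(n-2)) → Fin (2*(n-2))}

lemma insertHead_of_rest {m : Fin (2*n)} (h3 : 3 ≤ (m : ℕ)) (hm : (m : ℕ) ≠ x + 3) :
    insertHead hn hx g m = embed x (g (project hn hx m)) := by
  simp only [insertHead, if_neg hm, show (m : ℕ) ≠ 0 by omega, show (m : ℕ) ≠ 1 by omega,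
    show (m : ℕ) ≠ 2 by omega, if_false]

lemma deleteHead_insertHead : deleteHead hn hx (insertHead hn hx g) = g := by
  funext k
  simp only [deleteHead, Function.comp_apply,
    insertHead_of_rest hn hx (three_le_embed _) (val_embed_ne _), project_embed]

lemma val_insertHead_zero : (insertHead hn hx g ⟨0, by omega⟩ : ℕ) = x + 3 := by
  simp [insertHead]

lemma isShort_insertHead_two : IsShort n (insertHead hn hx g) 2 :=
  ⟨by omega, by omega, by simp [insertHead]⟩

lemma isLCD_insertHead (hg : IsLCD (n-2) g) : IsLCD n (insertHead hn hx g) := fun m => by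
  by_cases hrest : 3 ≤ (m : ℕ) ∧ (m : ℕ) ≠ x + 3
  · rw [insertHead_of_rest hn hx hrest.1 hrest.2,
      insertHead_of_rest hn hx (three_le_embed _) (val_embed_ne _), project_embed, (hg _).1,
      embed_project hn hx hrest.1 hrest.2]
    refine ⟨rfl, fun h => (hg (project hn hx m)).2 ?_⟩
    rw [← project_embed hn hx (g _), h]
  · unfold insertHead
    split_ifs <;> simp_all [Fin.ext_iff] <;> omega

variable {f : Fin (2*n) → Fin (2*n)}

lemma IsLCD.three_le_apply (hf : IsLCD n f) (h2 : IsShort n f 2) {m : Fin (2*n)}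
    (hm1 : (m : ℕ) ≠ 1) (hm2 : (m : ℕ) ≠ 2) (hm0 : (f m : ℕ) ≠ 0) : 3 ≤ (f m : ℕ) := by
  have := h2.bounds
  have e1 : f ⟨1, by omega⟩ = ⟨2, by omega⟩ := h2.2.2
  have e2 : f ⟨2, by omega⟩ = ⟨1, by omega⟩ := hf.apply_eq_iff.1 e1
  by_contra hlt
  obtain h | h : (f m : ℕ) = 1 ∨ (f m : ℕ) = 2 := by omega
  · rw [← (hf m).1, show f m = ⟨1, by omega⟩ from Fin.ext h, e1] at hm2
    exact hm2 rfl
  · rw [← (hf m).1, show f m = ⟨2, by omega⟩ from Fin.ext h, e2] at hm1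
    exact hm1 rfl

/-- `f` preserves `{0, 1, 2, x + 3}`, hence also its complement. -/
lemma IsLCD.mapsTo_rest (hf : IsLCD n f) (h0 : (f ⟨0, by omega⟩ : ℕ) = x + 3)
    (h2 : IsShort n f 2) {m : Fin (2*n)} (h3 : 3 ≤ (m : ℕ)) (hm : (m : ℕ) ≠ x + 3) :
    3 ≤ (f m : ℕ) ∧ (f m : ℕ) ≠ x + 3 := by
  have hx : x + 3 < 2*n := h0 ▸ (f _).isLt
  have ew : f ⟨x + 3, hx⟩ = ⟨0, by omega⟩ := hf.apply_eq_iff.1 (Fin.ext h0)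
  refine ⟨hf.three_le_apply h2 (by omega) (by omega) fun h => hm ?_, fun h => ?_⟩
  · rwa [← (hf m).1, show f m = ⟨0, by omega⟩ from Fin.ext h]
  · rw [← (hf m).1, show f m = ⟨x + 3, hx⟩ from Fin.ext h, ew] at h3
    simp at h3

lemma isLCD_deleteHead (hf : IsLCD n f) (h0 : (f ⟨0, by omega⟩ : ℕ) = x + 3)
    (h2 : IsShort n f 2) : IsLCD (n-2) (deleteHead hn hx f) := fun k => by
  obtain ⟨h3, hne⟩ := hf.mapsTo_rest hn h0 h2 (three_le_embed k) (val_embed_ne k)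
  simp only [deleteHead, Function.comp_apply, embed_project hn hx h3 hne, (hf _).1, project_embed]
  refine ⟨trivial, fun h => (hf (embed x k)).2 ?_⟩
  rw [← embed_project hn hx h3 hne, h]

lemma insertHead_deleteHead (hf : IsLCD n f) (h0 : (f ⟨0, by omega⟩ : ℕ) = x + 3)
    (h2 : IsShort n f 2) : insertHead hn hx (deleteHead hn hx f) = f := by
  funext m
  have e1 : f ⟨1, by omega⟩ = ⟨2, by omega⟩ := h2.2.2
  have e2 : f ⟨2, by omega⟩ = ⟨1, by omega⟩ := hf.apply_eq_iff.1 e1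
  have ew : f ⟨x + 3, hx⟩ = ⟨0, by omega⟩ := hf.apply_eq_iff.1 (Fin.ext h0)
  unfold insertHead
  split_ifs with hm0 hmw hm1 hm2
  · rw [show m = ⟨0, by omega⟩ from Fin.ext hm0]; exact Fin.ext h0.symm
  · rw [show m = ⟨x + 3, hx⟩ from Fin.ext hmw, ew]
  · rw [show m = ⟨1, by omega⟩ from Fin.ext hm1, e1]
  · rw [show m = ⟨2, by omega⟩ from Fin.ext hm2, e2]
  · have hm3 : 3 ≤ (m : ℕ) := by omega
    obtain ⟨h3, hne⟩ := hf.mapsTo_rest hn h0 h2 hm3 hmw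
    simp only [deleteHead, Function.comp_apply, embed_project hn hx hm3 hmw,
      embed_project hn hx h3 hne]

/-- The excluded `i = x` is the chord joining the two neighbours of the deleted vertex. -/
lemma isShort_deleteHead_iff (hf : IsLCD n f) (h0 : (f ⟨0, by omega⟩ : ℕ) = x + 3)
    (h2 : IsShort n f 2) {i : ℕ} (h1 : 1 ≤ i) (hi : i < 2*(n-2)) (hix : i ≠ x) :
    IsShort (n-2) (deleteHead hn hx f) i ↔ IsShort n f (liftIdx x i) := by
  have hlt : liftIdx x i < 2*n := (embed x ⟨i, hi⟩).isLt
  rw [isShort_iff_val h1 hi, isShort_iff_val (by have := three_le_liftIdx (x := x) i; omega) hlt]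
  have hk : i - 1 < 2*(n-2) := by omega
  have hprev : embed x ⟨i - 1, hk⟩ = ⟨liftIdx x i - 1, by omega⟩ :=
    Fin.ext (liftIdx_sub_one h1 hix)
  obtain ⟨h3, hne⟩ := hf.mapsTo_rest hn h0 h2 (three_le_embed ⟨i - 1, hk⟩) (val_embed_ne _)
  rw [hprev] at h3 hne
  simp only [deleteHead, Function.comp_apply, project]
  rw [hprev]
  constructor
  · intro h; exact (liftIdx_dropIdx h3 hne).symm.trans (congrArg (liftIdx x) h)
  · intro h; rw [h, dropIdx_liftIdx]

lemma forall_not_isShort_iff_deleteHead (hf : IsLCD n f) (h0 : (f ⟨0, by omega⟩ : ℕ) = x + 3)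
    (h2 : IsShort n f 2) :
    (∀ j, 4 ≤ j → ¬ IsShort n f j) ↔ ∀ i, IsShort (n-2) (deleteHead hn hx f) i → i = x := by
  constructor
  · intro hno i hs
    by_contra hix
    obtain ⟨h1, hi⟩ := hs.bounds
    refine hno _ ?_ ((isShort_deleteHead_iff hn hx hf h0 h2 h1 hi hix).1 hs)
    unfold liftIdx; split_ifs <;> omega
  · intro hall j hj hs
    obtain ⟨-, hj2⟩ := hs.bounds
    have hfj : f ⟨j - 1, by omega⟩ = ⟨j, hj2⟩ := hs.2.2
    have hprev : j - 1 ≠ x + 3 := fun h => by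
      have ew : f ⟨x + 3, hx⟩ = ⟨0, by omega⟩ := hf.apply_eq_iff.1 (Fin.ext h0)
      have := congrArg Fin.val (ew.symm.trans ((congrArg f (Fin.ext h.symm)).trans hfj))
      simp at this; omega
    have hjx : j ≠ x + 3 := fun h => by
      have := (hf.mapsTo_rest hn h0 h2 (m := ⟨j - 1, by omega⟩) (by simp; omega) hprev).2
      rw [hfj] at this; exact this h
    have hdrop := (project hn hx ⟨j, hj2⟩).isLt
    simp only [project] at hdrop
    have hlift : liftIdx x (dropIdx x j) = j := liftIdx_dropIdx (by omega) hjx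
    refine ((show dropIdx x j ≠ x by unfold dropIdx; split_ifs <;> omega)
      (hall _ ((isShort_deleteHead_iff hn hx hf h0 h2 ?_ hdrop ?_).2 (by rwa [hlift]))))
    · unfold dropIdx; split_ifs <;> omega
    · unfold dropIdx; split_ifs <;> omega

end Reduction

section Counting

open scoped Classical

variable {n : ℕ}

noncomputable def shortChords (n : ℕ) (f : Fin (2*n) → Fin (2*n)) : Finset ℕ :=
  (Icc 1 (2*n-1)).filter fun i => IsShort n f i

lemma mem_shortChords {f : Fin (2*n) → Fin (2*n)} {i : ℕ} :
    i ∈ shortChords n f ↔ IsShort n f i := by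
  simp only [shortChords, mem_filter, mem_Icc, and_iff_right_iff_imp]
  exact fun h => by have := h.bounds; omega

lemma d_eq_card (n s : ℕ) : d n s = #{f | IsLCD n f ∧ #(shortChords n f) = s} := rfl

lemma card_shortChords_subset_singleton (m x : ℕ) :
    #{g | IsLCD m g ∧ shortChords m g ⊆ {x}} =
      d m 0 + #{g | IsLCD m g ∧ shortChords m g = {x}} := by
  simp only [d_eq_card, card_eq_zero, subset_singleton_iff, and_or_left]
  rw [filter_or, card_union_of_disjoint]
  exact disjoint_filter.2 fun g _ h h' => singleton_ne_empty x (h'.2 ▸ h.2)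

lemma d_one_eq_sum (m : ℕ) {s : Finset ℕ} (hs : Icc 1 (2*m-1) ⊆ s) :
    d m 1 = ∑ x ∈ s, #{g | IsLCD m g ∧ shortChords m g = {x}} := by
  rw [← card_biUnion]
  · rw [d_eq_card]
    congr 1
    ext g
    simp only [mem_filter, mem_univ, true_and, mem_biUnion, card_eq_one]
    constructor
    · rintro ⟨hg, x, hx⟩
      have hxs : x ∈ shortChords m g := hx ▸ mem_singleton_self x
      exact ⟨x, hs (filter_subset _ _ hxs), hg, hx⟩
    · rintro ⟨x, -, hg, hx⟩
      exact ⟨hg, x, hx⟩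
  · intro x _ y _ hxy
    refine disjoint_filter.2 fun g _ hx hy => hxy ?_
    exact singleton_injective (hx.2.symm.trans hy.2)

lemma isBubble_four_iff (hn : 2 ≤ n) {f : Fin (2*n) → Fin (2*n)} :
    IsBubble n f 4 (2*n) ↔ IsShort n f 2 ∧ ∀ j, 4 ≤ j → ¬ IsShort n f j := by
  constructor
  · rintro ⟨-, -, -, hin, h | h, -⟩
    · omega
    · exact ⟨h, fun j hj hs => hin j hj (by have := hs.bounds; omega) hs⟩
  · rintro ⟨h, hin⟩
    exact ⟨by omega, by omega, le_rfl, fun j hj _ => hin j hj, .inr h, .inl rfl⟩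

lemma card_isBubble_four_of_apply_zero (hn : 3 ≤ n) {x : ℕ} (hx : x + 3 < 2*n) :
    #{f | IsLCD n f ∧ IsBubble n f 4 (2*n) ∧ (f ⟨0, by omega⟩ : ℕ) = x + 3} =
      #{g | IsLCD (n-2) g ∧ shortChords (n-2) g ⊆ {x}} := by
  have hsub : ∀ g : Fin (2*(n-2)) → Fin (2*(n-2)),
      shortChords (n-2) g ⊆ {x} ↔ ∀ i, IsShort (n-2) g i → i = x := fun g => by
    simp only [subset_iff, mem_singleton, mem_shortChords]
  have h4 : ∀ f : Fin (2*n) → Fin (2*n), IsBubble n f 4 (2*n) ↔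
      IsShort n f 2 ∧ ∀ j, 4 ≤ j → ¬ IsShort n f j := fun f => isBubble_four_iff (by omega)
  refine card_nbij' (deleteHead hn hx) (insertHead hn hx) (fun f hf => ?_) (fun g hg => ?_)
    (fun f hf => ?_) (fun g _ => deleteHead_insertHead hn hx)
  · simp only [coe_filter, mem_univ, true_and, Set.mem_ofPred_eq, h4, hsub] at hf ⊢
    obtain ⟨hf, ⟨h2, hno⟩, h0⟩ := hf
    exact ⟨isLCD_deleteHead hn hx hf h0 h2,
      (forall_not_isShort_iff_deleteHead hn hx hf h0 h2).1 hno⟩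
  · simp only [coe_filter, mem_univ, true_and, Set.mem_ofPred_eq, h4, hsub] at hg ⊢
    have hf := isLCD_insertHead hn hx hg.1
    have h0 := val_insertHead_zero hn hx (g := g)
    have h2 := isShort_insertHead_two hn hx (g := g)
    refine ⟨hf, ⟨h2, ?_⟩, h0⟩
    rw [forall_not_isShort_iff_deleteHead hn hx hf h0 h2, deleteHead_insertHead]
    exact hg.2
  · simp only [coe_filter, mem_univ, true_and, Set.mem_ofPred_eq, h4] at hf
    exact insertHead_deleteHead hn hx hf.1 hf.2.2 hf.2.1.1

lemma card_isBubble_four (hn : 3 ≤ n) :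
    #{f | IsLCD n f ∧ IsBubble n f 4 (2*n)} = (2*n - 3) * d (n-2) 0 + d (n-2) 1 := by
  rw [card_eq_sum_card_fiberwise (t := range (2*n - 3))
    (f := fun f : Fin (2*n) → Fin (2*n) => (f ⟨0, by omega⟩ : ℕ) - 3) fun f _ => by
      have := (f ⟨0, by omega⟩).isLt; simp only [coe_range, Set.mem_Iio]; omega]
  have hfiber : ∀ x ∈ range (2*n - 3),
      #{f ∈ {f | IsLCD n f ∧ IsBubble n f 4 (2*n)} | (f ⟨0, by omega⟩ : ℕ) - 3 = x} =
        d (n-2) 0 + #{g | IsLCD (n-2) g ∧ shortChords (n-2) g = {x}} := fun x hx => by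
    rw [← card_shortChords_subset_singleton, ← card_isBubble_four_of_apply_zero hn
      (by simp only [mem_range] at hx; omega), filter_filter]
    congr 1
    refine filter_congr fun f _ => ?_
    rw [and_assoc]
    refine and_congr_right fun hf => and_congr_right fun hb => ?_
    have := hf.three_le_apply (m := ⟨0, by omega⟩) ((isBubble_four_iff (by omega)).1 hb).1
      (by simp) (by simp) fun h => (hf _).2 (Fin.ext h)
    omega
  rw [sum_congr rfl hfiber, sum_add_distrib, sum_const, card_range, smul_eq_mul,
    ← d_one_eq_sum _ fun i hi => by simp only [mem_Icc, mem_range] at hi ⊢; omega]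

end Counting

/-- For every `n ≥ 3`, `B_{n,2n-3} = 2·((2n-3)·d_{n-2,0} + d_{n-2,1})`. -/
theorem bubble_size_sub_three (n : ℕ) (hn : 3 ≤ n) :
    B n (2*n-3) = 2 * ((2*n-3) * d (n-2) 0 + d (n-2) 1) := by
  rw [B_two_mul_sub_three, card_isBubble_one_eq_card_isBubble_four (by omega), card_isBubble_four hn]
  ring
end
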